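/- For a > 0, σ > 0, b ≥ h > 0 with b/(b+h) ≥ 1/2, set β* = (b/(b+h))^{1/N}. The function Z(β, q) = ((b+h)/2)·[Nμ - q + 2β^N(q - Nμ) + 2Nβ^N σ·sqrt((1-β)/β)] + ((b-h)/2)(Nμ - q) has a saddle point at β = β* and q* = Nμ + σ·((2β* - 1)/(2·sqrt((1-β*)β*)) - (N-1)·sqrt((1-β*)/β*)), with saddle value Z(β*, q*) = bσN·sqrt((1-β*)/β*). -/

import Mathlib

/-!
Writing `d = q - Nμ`, the cost is `Z(β, q) = (b + h) β^N (d + Nσ √((1-β)/β)) - b d`.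
Since `(b + h) β*^N = b`, the cost at `β*` does not depend on `q`, which gives the value and
the firm's side at once. For the adversary, the substitution `β = 1 / (1 + u²)` turns
`Z(β, q*) ≤ Z(β*, q*)` into `(d + Nσu)(1 + v²)^N ≤ (d + Nσv)(1 + u²)^N` with
`v = √((1-β*)/β*)`; the choice of `q*` is the first-order condition `2 v d = σ (1 - (2N-1) v²)`,
and with it the inequality is Bernoulli's inequality for `x ↦ x^N` between `1 + v²` and
`1 + u²`, plus `N (u - v)² ≥ 0`.
-/

open Real

/-- Worst-case expected inventory cost as a function of the adversary's
probability `β` and the firm's inventory level `q`. -/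
noncomputable def invCost (N : ℕ) (μ σ b h : ℝ) (β q : ℝ) : ℝ :=
  ((b + h) / 2) *
      (N * μ - q + 2 * β ^ N * (q - N * μ)
        + 2 * N * β ^ N * σ * Real.sqrt ((1 - β) / β))
    + ((b - h) / 2) * (N * μ - q)

lemma invCost_eq (N : ℕ) (μ σ b h β q : ℝ) :
    invCost N μ σ b h β q
      = (b + h) * (β ^ N * (q - N * μ + N * σ * √((1 - β) / β))) - b * (q - N * μ) := by
  unfold invCost; ring

lemma invCost_eq_of_mul_pow_eq {N : ℕ} {μ σ b h β : ℝ} (hβ : (b + h) * β ^ N = b)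
    (q : ℝ) :
    invCost N μ σ b h β q = b * σ * N * √((1 - β) / β) := by
  rw [invCost_eq]
  linear_combination (q - N * μ + N * σ * √((1 - β) / β)) * hβ

lemma mul_one_add_sq_sqrt_eq_one {β : ℝ} (hβ0 : 0 < β) (hβ1 : β ≤ 1) :
    β * (1 + √((1 - β) / β) ^ 2) = 1 := by
  rw [sq_sqrt (div_nonneg (by linarith) hβ0.le)]
  field_simp
  ring

/-- Tangent-line inequality for `x ↦ x ^ n` at `y`, multiplied through by `y`. -/
lemma pow_mul_tangent_le_mul_pow {x y : ℝ} (hx : 0 ≤ x) (hy : 0 < y) (n : ℕ) :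
    y ^ n * (y + n * (x - y)) ≤ y * x ^ n :=
  calc y ^ n * (y + n * (x - y)) = y ^ (n + 1) * (1 + n * (x / y - 1)) := by
        field_simp; ring
    _ ≤ y ^ (n + 1) * (x / y) ^ n := by
        gcongr
        exact one_add_mul_sub_le_pow (by linarith [div_nonneg hx hy.le]) n
    _ = y * x ^ n := by rw [div_pow]; field_simp; ring

lemma quadratic_mul_pow_le_mul_pow (n : ℕ) (u v : ℝ) :
    (1 - (2 * n - 1) * v ^ 2 + 2 * n * u * v) * (1 + v ^ 2) ^ n
      ≤ (1 + v ^ 2) * (1 + u ^ 2) ^ n :=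
  calc _ ≤ (1 + v ^ 2) ^ n * ((1 + v ^ 2) + n * ((1 + u ^ 2) - (1 + v ^ 2))) := by
        rw [mul_comm]
        refine mul_le_mul_of_nonneg_left ?_ (by positivity)
        nlinarith [mul_nonneg (Nat.cast_nonneg (α := ℝ) n) (sq_nonneg (u - v))]
    _ ≤ _ := pow_mul_tangent_le_mul_pow (by positivity) (by positivity) n

/-- The first-order condition of the adversary at `β`, for the shift `(q* - Nμ) / σ` of `q*`. -/
lemma two_mul_sqrt_mul_shift_eq (N : ℕ) {β : ℝ} (hβ0 : 0 < β) (hβ1 : β < 1) :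
    2 * √((1 - β) / β)
        * ((2 * β - 1) / (2 * √((1 - β) * β)) - (N - 1) * √((1 - β) / β))
      = 1 - (2 * N - 1) * √((1 - β) / β) ^ 2 := by
  have hβv := mul_one_add_sq_sqrt_eq_one hβ0 hβ1.le
  have hsqrt : √((1 - β) * β) = β * √((1 - β) / β) := by
    rw [show (1 - β) * β = (1 - β) / β * β ^ 2 by field_simp,
      sqrt_mul (div_nonneg (by linarith) hβ0.le), sqrt_sq hβ0.le, mul_comm]
  rw [hsqrt]
  set v := √((1 - β) / β)
  have hv0 : 0 < v := sqrt_pos.mpr (div_pos (by linarith) hβ0)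
  field_simp
  linear_combination hβv

lemma pow_mul_add_sqrt_le_of_critical {N : ℕ} {σ d β₀ β : ℝ} (hσ : 0 ≤ σ)
    (hβ₀0 : 0 < β₀) (hβ₀1 : β₀ < 1) (hβ0 : 0 < β) (hβ1 : β ≤ 1)
    (hd : 2 * √((1 - β₀) / β₀) * d = σ * (1 - (2 * N - 1) * √((1 - β₀) / β₀) ^ 2)) :
    β ^ N * (d + N * σ * √((1 - β) / β))
      ≤ β₀ ^ N * (d + N * σ * √((1 - β₀) / β₀)) := by
  set u := √((1 - β) / β)
  set v := √((1 - β₀) / β₀)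
  have hv0 : 0 < v := sqrt_pos.mpr (div_pos (by linarith) hβ₀0)
  have hβ : β ^ N = ((1 + u ^ 2) ^ N)⁻¹ := eq_inv_of_mul_eq_one_left <| by
    rw [← mul_pow, mul_one_add_sq_sqrt_eq_one hβ0 hβ1, one_pow]
  have hβ₀ : β₀ ^ N = ((1 + v ^ 2) ^ N)⁻¹ := eq_inv_of_mul_eq_one_left <| by
    rw [← mul_pow, mul_one_add_sq_sqrt_eq_one hβ₀0 hβ₀1.le, one_pow]
  have key : 2 * v * ((d + N * σ * u) * (1 + v ^ 2) ^ N)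
      ≤ 2 * v * ((d + N * σ * v) * (1 + u ^ 2) ^ N) := by
    linear_combination mul_le_mul_of_nonneg_left (quadratic_mul_pow_le_mul_pow N u v) hσ
      + ((1 + v ^ 2) ^ N - (1 + u ^ 2) ^ N) * hd
  rw [hβ, hβ₀, ← div_eq_inv_mul, ← div_eq_inv_mul,
    div_le_div_iff₀ (by positivity) (by positivity)]
  exact le_of_mul_le_mul_left key (by positivity)

theorem inventory_saddle_point_general (N : ℕ) (hN : 1 ≤ N) (μ σ b h : ℝ)
    (hσ : 0 < σ) (hh : 0 < h) (hbh : h ≤ b) :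
    let βstar : ℝ := (b / (b + h)) ^ ((1 : ℝ) / N)
    let qstar : ℝ := N * μ + σ *
      ((2 * βstar - 1) / (2 * Real.sqrt ((1 - βstar) * βstar))
        - (N - 1 : ℝ) * Real.sqrt ((1 - βstar) / βstar))
    invCost N μ σ b h βstar qstar = b * σ * N * Real.sqrt ((1 - βstar) / βstar)
      ∧ (∀ β : ℝ, 0 < β → β < 1 → invCost N μ σ b h β qstar
            ≤ invCost N μ σ b h βstar qstar)
      ∧ (∀ q : ℝ, invCost N μ σ b h βstar qstar ≤ invCost N μ σ b h βstar q) := by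
  intro βstar qstar
  have hb : 0 < b := hh.trans_le hbh
  have hr0 : 0 < b / (b + h) := by positivity
  have hr1 : b / (b + h) < 1 := (div_lt_one (by positivity)).mpr (by linarith)
  have hβ0 : 0 < βstar := rpow_pos_of_pos hr0 _
  have hβ1 : βstar < 1 := rpow_lt_one hr0.le hr1 (one_div_pos.mpr (Nat.cast_pos.mpr hN))
  have hβN : (b + h) * βstar ^ N = b := by
    rw [show βstar = (b / (b + h)) ^ ((N : ℝ)⁻¹) by rw [← one_div],
      rpow_inv_natCast_pow hr0.le (by omega)]
    field_simp
  have hval := invCost_eq_of_mul_pow_eq (μ := μ) (σ := σ) hβN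
  refine ⟨hval qstar, fun β hβ0' hβ1' => ?_, fun q => ((hval qstar).trans (hval q).symm).le⟩
  have hd : 2 * √((1 - βstar) / βstar) * (qstar - N * μ)
      = σ * (1 - (2 * N - 1) * √((1 - βstar) / βstar) ^ 2) := by
    rw [← two_mul_sqrt_mul_shift_eq N hβ0 hβ1]
    ring
  rw [invCost_eq, invCost_eq]
  gcongr (b + h) * ?_ - _
  exact pow_mul_add_sqrt_le_of_critical hσ.le hβ0 hβ1 hβ0' hβ1'.le hd

/-- Inventory risk-pooling: with `β* = (b/(b+h))^{1/N}` and the stated `q*`,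
the pair `(β*, q*)` is a saddle point of the zero-sum game, with value
`bσN·√((1-β*)/β*)`. -/
theorem inventory_saddle_point (N : ℕ) (hN : 1 ≤ N) (μ σ b h : ℝ)
    (hσ : 0 < σ) (hh : 0 < h) (hbh : h ≤ b)
    (hhalf : (1 : ℝ) / 2 ≤ b / (b + h)) :
    let βstar : ℝ := (b / (b + h)) ^ ((1 : ℝ) / N)
    let qstar : ℝ := N * μ + σ *
      ((2 * βstar - 1) / (2 * Real.sqrt ((1 - βstar) * βstar))
        - (N - 1 : ℝ) * Real.sqrt ((1 - βstar) / βstar))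
    invCost N μ σ b h βstar qstar = b * σ * N * Real.sqrt ((1 - βstar) / βstar)
      ∧ (∀ β : ℝ, 0 < β → β < 1 → invCost N μ σ b h β qstar
            ≤ invCost N μ σ b h βstar qstar)
      ∧ (∀ q : ℝ, invCost N μ σ b h βstar qstar ≤ invCost N μ σ b h βstar q) :=
  inventory_saddle_point_general N hN μ σ b h hσ hh hbh
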